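/- arXiv:1904.08339 — 2 statements merged into one kernel-verified Lean document; each statement's English description precedes it below -/
import Mathlib

section
/- Let X^j be the strictly increasing sequence of positions (indexed from 1) of the letter j in the k-bonacci word ω, for 0 ≤ j ≤ k−1. Then for each 0 ≤ j ≤ k−2, the set X^j equals the union of the translates X^{j+1} − 2^j and X^{j+1} + 2^j. -/
/-- The k-bonacci substitution on the alphabet {0,…,k−1}. -/
def subW (k : ℕ) (w : List ℕ) : List ℕ :=
  w.flatMap (fun j => if j + 1 < k then [0, j + 1] else [0])

/-- The k-bonacci word (0-indexed). -/
def kbonacci (k n : ℕ) : ℕ := ((subW k)^[n + 1] [0]).getD n 0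

/-- X^j: the set of (1-based) positions of the letter j in the k-bonacci word. -/
def Xset (k j : ℕ) : Set ℕ := {n | 1 ≤ n ∧ kbonacci k (n - 1) = j}

namespace KB

/-- finite k-bonacci words -/
def W (k m : ℕ) : List ℕ := (subW k)^[m] [0]

/-- their lengths (k-bonacci numbers) -/
def L (k m : ℕ) : ℕ := (W k m).length

/-- descending concatenation of j words starting at index s -/
def gg (k : ℕ) : ℕ → ℕ → List ℕ
  | _, 0 => []
  | s, j+1 => W k s ++ gg k (s-1) j

/-- remainder of the canonical factorization of `W k m` after `h` factors -/
def Zc (k m h : ℕ) : List ℕ :=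
  gg k (m - 1 - h) (min k m - h) ++ (if m < k then [m] else [])

/-- value of an LSB-first bit list, with weights L starting at index p -/
def valAux (k : ℕ) : List Bool → ℕ → ℕ
  | [], _ => 0
  | b :: t, p => (if b then L k p else 0) + valAux k t (p+1)

/-- sum of j consecutive L's starting at p -/
def sumL (k : ℕ) : ℕ → ℕ → ℕ
  | _, 0 => 0
  | p, j+1 => L k p + sumL k (p+1) j

/-- number of leading `true`s -/
def leadTrues : List Bool → ℕ
  | true :: t => leadTrues t + 1
  | _ => 0

/-- no k consecutive set bits -/
def noK (k : ℕ) (r : List Bool) : Prop := ¬ (List.replicate k true <:+: r)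

/-- word associated to an MSB-first bit list -/
def dword (k : ℕ) : List Bool → List ℕ
  | [] => []
  | b :: t => (if b then W k t.length else []) ++ dword k t

section Basic
variable {k : ℕ}

theorem subW_append (u v : List ℕ) : subW k (u ++ v) = subW k u ++ subW k v :=
  List.flatMap_append ..

theorem subW_cons (a : ℕ) (t : List ℕ) :
    subW k (a :: t) = (if a + 1 < k then [0, a+1] else [0]) ++ subW k t := rfl

theorem W_zero : W k 0 = [0] := rfl

theorem W_succ (m : ℕ) : W k (m+1) = subW k (W k m) :=
  Function.iterate_succ_apply' ..

theorem subW_len_ge (w : List ℕ) : w.length ≤ (subW k w).length := by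
  induction w with
  | nil => simp [subW]
  | cons a t ih =>
      rw [subW_cons]
      by_cases h : a + 1 < k <;> simp [h] <;> omega

theorem subW_len_le (w : List ℕ) : (subW k w).length ≤ 2 * w.length := by
  induction w with
  | nil => simp [subW]
  | cons a t ih =>
      rw [subW_cons]
      by_cases h : a + 1 < k <;> simp [h] <;> omega

theorem W_head (hk : 2 ≤ k) (m : ℕ) : ∃ t, W k m = 0 :: t := by
  induction m with
  | zero => exact ⟨[], rfl⟩
  | succ m ih =>
      obtain ⟨t, ht⟩ := ih
      refine ⟨1 :: subW k t, ?_⟩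
      rw [W_succ, ht, subW_cons, if_pos (by omega)]
      rfl

theorem L_zero : L k 0 = 1 := rfl

theorem L_lt_succ (hk : 2 ≤ k) (m : ℕ) : L k m < L k (m+1) := by
  obtain ⟨t, ht⟩ := W_head hk m
  have h1 := subW_len_ge (k := k) t
  unfold L
  rw [W_succ, ht, subW_cons, if_pos (by omega)]
  simp only [List.length_append, List.length_cons]
  simp only [List.length_cons, List.length]
  omega

theorem L_mono (hk : 2 ≤ k) : StrictMono (L k) :=
  strictMono_nat_of_lt_succ (L_lt_succ hk)

theorem L_ge (hk : 2 ≤ k) (m : ℕ) : m + 1 ≤ L k m := by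
  induction m with
  | zero => simp [L_zero]
  | succ m ih => have := L_lt_succ hk m; omega

theorem L_succ_le (m : ℕ) : L k (m+1) ≤ 2 * L k m := by
  unfold L; rw [W_succ]; exact subW_len_le _

theorem subW_prefix {u v : List ℕ} (h : u <+: v) : subW k u <+: subW k v := by
  obtain ⟨t, rfl⟩ := h
  exact ⟨subW k t, (subW_append u t).symm⟩

theorem W_prefix_succ (hk : 2 ≤ k) (m : ℕ) : W k m <+: W k (m+1) := by
  induction m with
  | zero =>
      show W k 0 <+: subW k (W k 0)
      rw [W_zero, subW_cons, if_pos (by omega)]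
      exact ⟨[1] ++ subW k [], by simp⟩
  | succ n ih =>
      rw [W_succ, W_succ]
      exact subW_prefix ih

theorem W_prefix (hk : 2 ≤ k) {m m' : ℕ} (h : m ≤ m') : W k m <+: W k m' := by
  induction m' with
  | zero => rw [Nat.le_zero.mp h]
  | succ m' ih =>
      rcases Nat.lt_or_ge m (m'+1) with h' | h'
      · exact (ih (by omega)).trans (W_prefix_succ hk m')
      · have : m = m' + 1 := by omega
        rw [this]

theorem getD_prefix {u v : List ℕ} (h : u <+: v) {n : ℕ} (hn : n < u.length) :
    v.getD n 0 = u.getD n 0 := by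
  obtain ⟨t, rfl⟩ := h
  exact List.getD_append u t 0 n hn

theorem kbonacci_eq (n : ℕ) : kbonacci k n = (W k (n+1)).getD n 0 := rfl

theorem stable (hk : 2 ≤ k) {m n : ℕ} (hn : n < L k m) :
    kbonacci k n = (W k m).getD n 0 := by
  rcases Nat.le_total m (n+1) with h | h
  · rw [kbonacci_eq, getD_prefix (W_prefix hk h) hn]
  · have hlen : n < (W k (n+1)).length := by
      have := L_ge hk (n+1); unfold L at this; omega
    rw [kbonacci_eq, getD_prefix (W_prefix hk h) hlen]

end Basic

section Fact
variable {k : ℕ}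

theorem gg_zero (s : ℕ) : gg k s 0 = [] := rfl
theorem gg_succ (s j : ℕ) : gg k s (j+1) = W k s ++ gg k (s-1) j := rfl

theorem gg_snoc (j : ℕ) : ∀ s, gg k s (j+1) = gg k s j ++ W k (s - j) := by
  induction j with
  | zero => intro s; simp [gg_succ, gg_zero]
  | succ j ih =>
      intro s
      have h3 : s - 1 - j = s - (j+1) := by omega
      rw [gg_succ s (j+1), ih (s-1), gg_succ s j, List.append_assoc, h3]

theorem subW_gg : ∀ j s, j ≤ s + 1 → subW k (gg k s j) = gg k (s+1) j := by
  intro j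
  induction j with
  | zero => intro s _; simp [gg_zero, subW]
  | succ j ih =>
      intro s hj
      rw [gg_succ, subW_append, ← W_succ, gg_succ]
      cases j with
      | zero => simp [gg_zero, subW]
      | succ n =>
          have hs : 1 ≤ s := by omega
          have := ih (s-1) (by omega)
          rw [this]
          congr 2
          omega

/-- the canonical factorization -/
theorem factorization (hk : 2 ≤ k) (m : ℕ) :
    W k m = gg k (m-1) (min k m) ++ (if m < k then [m] else []) := by
  induction m with
  | zero =>
      rw [if_pos (by omega), W_zero]
      simp [gg_zero]
  | succ m ih =>
      rcases Nat.eq_zero_or_pos m with rfl | hm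
      · rw [if_pos (by omega)]
        have hmin : min k 1 = 1 := by omega
        rw [hmin]
        show W k 1 = gg k 0 1 ++ [1]
        rw [gg_succ, gg_zero, W_succ, W_zero, subW_cons, if_pos (by omega)]
        rfl
      · have hm1 : m - 1 + 1 = m := by omega
        have hm2 : m + 1 - 1 = m := by omega
        rcases Nat.lt_or_ge m k with hmk | hmk
        · have hmin : min k m = m := min_eq_right hmk.le
          rw [W_succ, ih, hmin, if_pos hmk, subW_append, subW_gg m (m-1) (by omega), hm1,
            subW_cons]
          rcases Nat.lt_or_ge (m+1) k with h2 | h2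
          · have hmin2 : min k (m+1) = m + 1 := by omega
            rw [if_pos h2, if_pos (by omega), hmin2, hm2]
            have hgg : gg k m (m+1) = gg k m m ++ W k 0 := by
              rw [gg_snoc]
              congr 2
              omega
            rw [hgg, W_zero]
            simp [subW]
          · have hmk2 : m + 1 = k := by omega
            have hmin2 : min k (m+1) = k := by omega
            rw [if_neg (by omega), if_neg (by omega), hmin2, hm2]
            have hgg : gg k m k = gg k m m ++ W k 0 := by
              conv_lhs => rw [← hmk2]
              rw [gg_snoc]
              congr 2
              omega
            rw [hgg, W_zero]
            simp [subW]
        · have hmin : min k m = k := min_eq_left hmk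
          have hmin2 : min k (m+1) = k := by omega
          rw [W_succ, ih, hmin, if_neg (by omega), if_neg (by omega), hmin2, hm2,
            subW_append, subW_gg k (m-1) (by omega), hm1]
          simp [subW]

theorem Zc_zero (hk : 2 ≤ k) (m : ℕ) : Zc k m 0 = W k m := by
  rw [Zc, Nat.sub_zero, Nat.sub_zero, ← factorization hk]

theorem Zc_unfold (m h : ℕ) (h1 : h < min k m) :
    Zc k m h = W k (m - 1 - h) ++ Zc k m (h+1) := by
  have h2 : min k m - h = (min k m - (h+1)) + 1 := by omega
  have h3 : m - 1 - h - 1 = m - 1 - (h+1) := by omega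
  rw [Zc, Zc, h2, gg_succ, h3, List.append_assoc]

end Fact

section NoK
variable {k : ℕ}

theorem noK_nil (hk : 1 ≤ k) : noK k [] := by
  intro h
  have := h.length_le
  simp at this
  omega

theorem noK_of_infix {x y : List Bool} (h : x <:+: y) (hy : noK k y) : noK k x :=
  fun hc => hy (hc.trans h)

theorem noK_cons {b : Bool} {t : List Bool} (h : noK k (b :: t)) : noK k t :=
  noK_of_infix (List.infix_cons_iff.mpr (Or.inr (List.infix_refl t))) h

theorem replicate_true_prefix_le {i : ℕ} {t : List Bool}
    (h : List.replicate i true <+: t) : i ≤ leadTrues t := by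
  induction i generalizing t with
  | zero => omega
  | succ i ih =>
      rw [List.replicate_succ] at h
      cases t with
      | nil => exact absurd h.length_le (by simp)
      | cons b t' =>
          rw [List.cons_prefix_cons] at h
          obtain ⟨rfl, h2⟩ := h
          have := ih h2
          simp [leadTrues]
          omega

theorem leadTrues_prefix (t : List Bool) : List.replicate (leadTrues t) true <+: t := by
  induction t with
  | nil => simp [leadTrues]
  | cons b t' ih =>
      cases b with
      | false => simp [leadTrues]
      | true =>
          show List.replicate (leadTrues t' + 1) true <+: true :: t'
          rw [List.replicate_succ, List.cons_prefix_cons]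
          exact ⟨rfl, ih⟩

theorem leadTrues_lt (hk : 1 ≤ k) {t : List Bool} (h : noK k t) : leadTrues t < k := by
  by_contra hc
  push_neg at hc
  apply h
  refine List.IsPrefix.isInfix ?_
  refine List.IsPrefix.trans ?_ (leadTrues_prefix t)
  exact ⟨List.replicate (leadTrues t - k) true, by rw [← List.replicate_add]; congr 1; omega⟩

theorem noK_cons_false {t : List Bool} (hk : 1 ≤ k) (h : noK k t) : noK k (false :: t) := by
  intro hc
  rcases List.infix_cons_iff.mp hc with h1 | h1
  · cases k with
    | zero => omega
    | succ n =>
        rw [List.replicate_succ, List.cons_prefix_cons] at h1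
        exact absurd h1.1 (by simp)
  · exact h h1

theorem noK_cons_true {t : List Bool} (h : noK k t) (h2 : leadTrues t + 1 < k) :
    noK k (true :: t) := by
  intro hc
  rcases List.infix_cons_iff.mp hc with h1 | h1
  · cases k with
    | zero => omega
    | succ n =>
        rw [List.replicate_succ, List.cons_prefix_cons] at h1
        have := replicate_true_prefix_le h1.2
        omega
  · exact h h1

theorem noK_replicate_true (hk : 1 ≤ k) {i : ℕ} (h : i < k) : noK k (List.replicate i true) := by
  intro hc
  have := hc.length_le
  simp at this
  omega

theorem noK_reverse {t : List Bool} : noK k t.reverse ↔ noK k t := by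
  unfold noK
  rw [← List.reverse_infix, List.reverse_replicate, List.reverse_reverse]

theorem noK_replicate_false_append {t : List Bool} (hk : 1 ≤ k) (h : noK k t) (d : ℕ) :
    noK k (List.replicate d false ++ t) := by
  induction d with
  | zero => simpa
  | succ d ih => rw [List.replicate_succ, List.cons_append]; exact noK_cons_false hk ih

theorem noK_append_replicate_false {t : List Bool} (hk : 1 ≤ k) (h : noK k t) (d : ℕ) :
    noK k (t ++ List.replicate d false) := by
  rw [← noK_reverse, List.reverse_append, List.reverse_replicate]
  exact noK_replicate_false_append hk (noK_reverse.mpr h) d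

theorem leadTrues_replicate (i : ℕ) : leadTrues (List.replicate i true) = i := by
  induction i with
  | zero => rfl
  | succ i ih => rw [List.replicate_succ]; show leadTrues _ + 1 = i + 1; rw [ih]

theorem leadTrues_append_false (j : ℕ) (t : List Bool) :
    leadTrues (List.replicate j true ++ false :: t) = j := by
  induction j with
  | zero => rfl
  | succ j ih =>
      rw [List.replicate_succ, List.cons_append]
      show leadTrues _ + 1 = j + 1
      rw [ih]

theorem noK_comp (hk : 1 ≤ k) {j : ℕ} (hj : j < k) {t : List Bool} (h : noK k t) :
    noK k (List.replicate j true ++ false :: t) := by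
  induction j with
  | zero => exact noK_cons_false hk h
  | succ j ih =>
      rw [List.replicate_succ, List.cons_append]
      refine noK_cons_true (ih (by omega)) ?_
      rw [leadTrues_append_false]
      omega

theorem leadTrues_split (r : List Bool) :
    ∃ u, (r = List.replicate (leadTrues r) true ++ false :: u ∧
          leadTrues r < r.length) ∨
         (r = List.replicate (leadTrues r) true ∧ leadTrues r = r.length) := by
  induction r with
  | nil => exact ⟨[], Or.inr ⟨rfl, rfl⟩⟩
  | cons b t ih =>
      cases b with
      | false => exact ⟨t, Or.inl ⟨rfl, by simp [leadTrues]⟩⟩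
      | true =>
          obtain ⟨u, h | h⟩ := ih
          · refine ⟨u, Or.inl ?_⟩
            show true :: t = List.replicate (leadTrues t + 1) true ++ false :: u ∧ _
            rw [List.replicate_succ, List.cons_append]
            constructor
            · rw [← h.1]
            · simp [leadTrues]; omega
          · refine ⟨u, Or.inr ?_⟩
            show true :: t = List.replicate (leadTrues t + 1) true ∧ leadTrues t + 1 = t.length + 1
            rw [List.replicate_succ]
            constructor
            · rw [← h.1]
            · omega

end NoK

section Main
variable {k : ℕ}

theorem prefix_append_left {u v : List ℕ} (w : List ℕ) (h : u <+: v) :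
    w ++ u <+: w ++ v := by
  obtain ⟨t, rfl⟩ := h
  exact ⟨t, by simp⟩

/-- Main prefix lemma: the word associated to a legal bit list is a prefix. -/
theorem dword_prefix (hk : 2 ≤ k) :
    ∀ (s : List Bool) (h : ℕ), noK k (List.replicate h true ++ s) →
      dword k s <+: Zc k (s.length + h) h := by
  intro s
  induction s with
  | nil => intro h _; exact List.nil_prefix
  | cons b t ih =>
      intro h hno
      have hk1 : (1:ℕ) ≤ k := by omega
      have hh : h < k := by
        by_contra hc
        push_neg at hc
        apply hno
        apply List.IsPrefix.isInfix
        have h1 : List.replicate k true <+: List.replicate h true :=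
          ⟨List.replicate (h - k) true, by rw [← List.replicate_add]; congr 1; omega⟩
        exact h1.trans (List.prefix_append _ _)
      have hm : h < min k ((b :: t).length + h) := by simp; omega
      rw [Zc_unfold _ _ hm]
      have hlen : (b :: t).length + h - 1 - h = t.length := by simp
      rw [hlen]
      cases b with
      | false =>
          have hnt : noK k t := by
            have h2 : noK k (false :: t) :=
              noK_of_infix (List.suffix_append _ _).isInfix hno
            exact noK_cons h2
          have h1 := ih 0 (by simpa using hnt)
          rw [Zc_zero hk] at h1
          show dword k t <+: _
          exact h1.trans (List.prefix_append _ _)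
      | true =>
          have hno' : noK k (List.replicate (h+1) true ++ t) := by
            rw [List.replicate_succ']
            simpa using hno
          have h1 := ih (h+1) hno'
          have harith : t.length + (h+1) = (true :: t).length + h := by simp; omega
          rw [harith] at h1
          show W k t.length ++ dword k t <+: _
          exact prefix_append_left _ h1

end Main
end KB

namespace KB
section Arith
variable {k : ℕ}

theorem valAux_nil (p : ℕ) : valAux k [] p = 0 := rfl
theorem valAux_cons (b : Bool) (t : List Bool) (p : ℕ) :
    valAux k (b :: t) p = (if b then L k p else 0) + valAux k t (p+1) := rfl

theorem valAux_append (x y : List Bool) : ∀ p,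
    valAux k (x ++ y) p = valAux k x p + valAux k y (p + x.length) := by
  induction x with
  | nil => intro p; simp [valAux_nil]
  | cons b t ih =>
      intro p
      rw [List.cons_append, valAux_cons, valAux_cons, ih (p+1)]
      have e : p + 1 + t.length = p + (t.length + 1) := by omega
      simp only [List.length_cons, e]
      omega

theorem valAux_replicate_true (i : ℕ) : ∀ p, valAux k (List.replicate i true) p = sumL k p i := by
  induction i with
  | zero => intro p; rfl
  | succ i ih =>
      intro p
      rw [List.replicate_succ, valAux_cons, if_pos rfl, ih (p+1)]
      rfl

theorem valAux_replicate_false (i : ℕ) : ∀ p, valAux k (List.replicate i false) p = 0 := by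
  induction i with
  | zero => intro p; rfl
  | succ i ih =>
      intro p
      rw [List.replicate_succ, valAux_cons, if_neg (by simp), ih (p+1)]

theorem sumL_succ (p j : ℕ) : sumL k p (j+1) = L k p + sumL k (p+1) j := rfl

theorem sumL_snoc (j : ℕ) : ∀ p, sumL k p (j+1) = sumL k p j + L k (p+j) := by
  induction j with
  | zero =>
      intro p
      simp [sumL_succ, show sumL k (p+1) 0 = 0 from rfl, show sumL k p 0 = 0 from rfl]
  | succ j ih =>
      intro p
      rw [sumL_succ, ih (p+1), sumL_succ]
      have : p + 1 + j = p + (j+1) := by omega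
      rw [this]
      omega

theorem gg_length (j : ℕ) : ∀ s, j ≤ s + 1 → (gg k s j).length = sumL k (s+1-j) j := by
  induction j with
  | zero => intro s _; rfl
  | succ j ih =>
      intro s hj
      rw [gg_succ]
      cases j with
      | zero => simp [gg_zero, sumL_succ]; rfl
      | succ n =>
          have hs : 1 ≤ s := by omega
          have e1 : s - 1 + 1 - (n+1) = s + 1 - (n+1+1) := by omega
          have e2 : s + 1 - (n+1+1) + (n+1) = s := by omega
          rw [List.length_append, ih (s-1) (by omega), e1]
          conv_rhs => rw [sumL_snoc]
          rw [e2]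
          show L k s + _ = _ + L k s
          omega

/-- the k-step recurrence -/
theorem L_rec (hk : 2 ≤ k) (p : ℕ) : L k (p + k) = sumL k p k := by
  have h := factorization hk (p + k)
  rw [if_neg (by omega)] at h
  have hmin : min k (p + k) = k := by omega
  rw [hmin] at h
  have := congrArg List.length h
  rw [List.length_append, gg_length k (p+k-1) (by omega)] at this
  simpa [L, show p + k - 1 + 1 - k = p by omega] using this

/-- letters of W k m are at most m -/
theorem W_letter_le (m : ℕ) : ∀ a ∈ W k m, a ≤ m := by
  induction m with
  | zero => intro a ha; rw [W_zero] at ha; simp at ha; omega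
  | succ m ih =>
      intro a ha
      rw [W_succ] at ha
      unfold subW at ha
      rw [List.mem_flatMap] at ha
      obtain ⟨b, hb, hab⟩ := ha
      have := ih b hb
      by_cases h : b + 1 < k <;> simp [h] at hab <;> rcases hab with rfl | rfl <;> omega

theorem subW_length_all (w : List ℕ) (h : ∀ a ∈ w, a + 1 < k) :
    (subW k w).length = 2 * w.length := by
  induction w with
  | nil => simp [subW]
  | cons a t ih =>
      rw [subW_cons, if_pos (h a (by simp))]
      simp [ih (fun a ha => h a (by simp [ha]))]
      omega

theorem L_pow {i : ℕ} (h : i < k) : L k i = 2 ^ i := by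
  induction i with
  | zero => rfl
  | succ i ih =>
      have h2 : L k (i+1) = 2 * L k i := by
        unfold L
        rw [W_succ]
        exact subW_length_all _ (fun a ha => by have := W_letter_le i a ha; omega)
      rw [h2, ih (by omega), pow_succ]
      omega

theorem sumL_pow : ∀ (j p : ℕ), p + j ≤ k → sumL k p j = 2 ^ (p+j) - 2 ^ p := by
  intro j
  induction j with
  | zero => intro p _; simp [show sumL k p 0 = 0 from rfl]
  | succ j ih =>
      intro p hp
      rw [sumL_succ, ih (p+1) (by omega), L_pow (by omega)]
      have h1 : 2 ^ p ≤ 2 ^ (p + 1) := Nat.pow_le_pow_right (by omega) (by omega)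
      have h2 : 2 ^ (p+1) ≤ 2 ^ (p + 1 + j) := Nat.pow_le_pow_right (by omega) (by omega)
      have h3 : p + 1 + j = p + (j + 1) := by omega
      rw [h3] at h2 ⊢
      omega

theorem sumL_low {j : ℕ} (h : j ≤ k) : sumL k 0 j = 2 ^ j - 1 := by
  have := sumL_pow (k := k) j 0 (by omega)
  simpa using this

end Arith

section Dword
variable {k : ℕ}

theorem dword_nil : dword k [] = [] := rfl
theorem dword_cons (b : Bool) (t : List Bool) :
    dword k (b :: t) = (if b then W k t.length else []) ++ dword k t := rfl

theorem dword_length (s : List Bool) : (dword k s).length = valAux k s.reverse 0 := by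
  induction s with
  | nil => rfl
  | cons b t ih =>
      rw [dword_cons, List.length_append, ih, List.reverse_cons, valAux_append]
      simp only [List.length_reverse, valAux_cons, valAux_nil]
      cases b
      · simp
      · simp only [if_pos]
        show L k t.length + _ = _ + (L k (0 + t.length) + 0)
        simp only [Nat.zero_add, Nat.add_zero]
        omega

theorem subW_dword (s : List Bool) : subW k (dword k s) = dword k (s ++ [false]) := by
  induction s with
  | nil => rfl
  | cons b t ih =>
      rw [dword_cons, subW_append, ih]
      show _ = (if b then W k (t ++ [false]).length else []) ++ dword k (t ++ [false])
      congr 1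
      cases b with
      | false => rfl
      | true => simp [← W_succ]

end Dword
end KB

namespace KB
section Letter
variable {k : ℕ}

/-- The letter at the position given by a legal bit list is the number of its low set bits. -/
theorem letter (hk : 2 ≤ k) : ∀ r, noK k r → kbonacci k (valAux k r 0) = leadTrues r := by
  intro r
  induction r with
  | nil =>
      intro _
      show kbonacci k 0 = 0
      rw [kbonacci_eq]
      obtain ⟨t, ht⟩ := W_head hk 1
      rw [ht]
      rfl
  | cons b t ih =>
      intro hno
      have hk1 : (1:ℕ) ≤ k := by omega
      have hnt : noK k t := noK_cons hno
      have hnrev : noK k t.reverse := noK_reverse.mpr hnt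
      set M := t.length with hM
      set u := dword k t.reverse with hu
      have h0 : u <+: W k M := by
        have := dword_prefix hk t.reverse 0 (by simpa using hnrev)
        rw [Zc_zero hk] at this
        simpa using this
      have h1 : u <+: W k (M+1) := h0.trans (W_prefix_succ hk M)
      obtain ⟨v, hv⟩ := h1
      have hlenu : u.length = valAux k t 0 := by
        rw [hu, dword_length, List.reverse_reverse]
      have hvne : v ≠ [] := by
        intro hemp
        rw [hemp, List.append_nil] at hv
        have h2 := h0.length_le
        have h3 := L_lt_succ hk M
        rw [hv] at h2
        unfold L at h3
        omega
      obtain ⟨c, v'', rfl⟩ : ∃ c v'', v = c :: v'' := by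
        cases v with
        | nil => exact absurd rfl hvne
        | cons c v'' => exact ⟨c, v'', rfl⟩
      have hW2 : W k (M+2) = subW k u ++ ((if c+1<k then [0,c+1] else [0]) ++ subW k v'') := by
        rw [show M + 2 = (M+1)+1 from rfl, W_succ, ← hv, subW_append, subW_cons]
      have hsublen : (subW k u).length = valAux k t 1 := by
        rw [hu, subW_dword, dword_length, List.reverse_append, List.reverse_reverse]
        show valAux k (false :: t) 0 = _
        rw [valAux_cons]
        simp
      have hL2 : L k (M+2) = (subW k u).length + ((if c+1<k then [0,c+1] else [0]).length + (subW k v'').length) := by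
        unfold L
        rw [hW2]
        simp
      have hblock : 1 ≤ (if c+1<k then [0,c+1] else [0] : List ℕ).length := by
        by_cases h : c + 1 < k <;> simp [h]
      cases b with
      | false =>
          show kbonacci k (0 + valAux k t 1) = leadTrues (false :: t)
          have hlt : valAux k t 1 < L k (M+2) := by omega
          rw [Nat.zero_add, stable hk hlt, hW2, ← hsublen,
            List.getD_append_right _ _ _ _ (le_refl _), Nat.sub_self]
          show ((if c+1<k then [0,c+1] else [0]) ++ subW k v'').getD 0 0 = leadTrues (false :: t)
          have : leadTrues (false :: t) = 0 := rfl
          rw [this]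
          by_cases h : c + 1 < k <;> simp [h]
      | true =>
          show kbonacci k (L k 0 + valAux k t 1) = leadTrues (true :: t)
          have hLT : leadTrues (true :: t) = leadTrues t + 1 := rfl
          have ha : kbonacci k (valAux k t 0) = leadTrues t := ih hnt
          have hak : leadTrues t + 1 < k := by
            have := leadTrues_lt hk1 hno
            rw [hLT] at this
            exact this
          -- the letter c is leadTrues t
          have hc : c = leadTrues t := by
            have hulen : u.length < L k (M+1) := by
              have h2 := h0.length_le
              have h3 := L_lt_succ hk M
              unfold L at h3 ⊢
              omega
            have := stable hk (m := M+1) (n := u.length) (by exact hulen)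
            rw [← hv, List.getD_append_right _ _ _ _ (le_refl _), Nat.sub_self] at this
            simp at this
            rw [hlenu] at this
            rw [← this, ha]
          have hlt : L k 0 + valAux k t 1 < L k (M+2) := by
            have : (if c+1<k then [0,c+1] else [0] : List ℕ).length = 2 := by
              rw [if_pos (by omega : c + 1 < k)]
              rfl
            rw [L_zero]
            omega
          rw [stable hk hlt, hW2]
          have e1 : L k 0 + valAux k t 1 = (subW k u).length + 1 := by
            rw [hsublen, L_zero]
            omega
          rw [e1, List.getD_append_right _ _ _ _ (by omega), Nat.add_sub_cancel_left]
          rw [if_pos (by omega : c + 1 < k)]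
          show c + 1 = leadTrues (true :: t)
          rw [hc, hLT]

end Letter
end KB

namespace KB
section Exist
variable {k : ℕ}

theorem valAux_single (p : ℕ) : valAux k [true] p = L k p := by
  rw [valAux_cons, valAux_nil, if_pos rfl]
  omega

theorem noK_single (hk : 2 ≤ k) : noK k [true] := by
  have h := noK_replicate_true (k := k) (by omega) (show 1 < k by omega)
  simpa using h

/-- every natural number has a legal representation -/
theorem exists_rep (hk : 2 ≤ k) (n : ℕ) :
    ∃ r, noK k r ∧ valAux k r 0 = n ∧ ∀ mm, n < L k mm → r.length ≤ mm := by
  induction n using Nat.strong_induction_on with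
  | _ n IH =>
  rcases Nat.eq_zero_or_pos n with rfl | hn
  · exact ⟨[], noK_nil (by omega), rfl, fun mm _ => by simp⟩
  · have hex : ∃ m, n < L k (m+1) := ⟨n, by have := L_ge hk (n+1); omega⟩
    set m := Nat.find hex with hmdef
    have hup : n < L k (m+1) := Nat.find_spec hex
    have hlow : L k m ≤ n := by
      rcases Nat.eq_zero_or_pos m with hm0 | hm0
      · rw [hm0, L_zero]; omega
      · have := Nat.find_min hex (show m - 1 < m by omega)
        push_neg at this
        have e : m - 1 + 1 = m := by omega
        rwa [e] at this
    have hsub : n - L k m < L k m := by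
      have := L_succ_le (k := k) m
      omega
    have hL1 : 1 ≤ L k m := by have := L_ge hk m; omega
    obtain ⟨r', hno', hval', hlen'⟩ := IH (n - L k m) (by omega)
    have hrlen : r'.length ≤ m := hlen' m hsub
    set d := m - r'.length with hd
    refine ⟨r' ++ List.replicate d false ++ [true], ?_, ?_, ?_⟩
    · -- noK
      intro hcon
      rw [← List.reverse_infix] at hcon
      rw [List.reverse_replicate] at hcon
      have hrev : (r' ++ List.replicate d false ++ [true]).reverse
          = true :: (List.replicate d false ++ r'.reverse) := by
        simp [List.reverse_append, List.reverse_replicate]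
      rw [hrev] at hcon
      rcases List.infix_cons_iff.mp hcon with h1 | h1
      · -- prefix case
        obtain ⟨k', hk'⟩ : ∃ k', k = k' + 1 := ⟨k - 1, by omega⟩
        rw [hk', List.replicate_succ, List.cons_prefix_cons] at h1
        have h2 := h1.2
        rcases Nat.eq_zero_or_pos d with hd0 | hd0
        · rw [hd0] at h2
          simp at h2
          -- r'.reverse starts with k-1 trues
          obtain ⟨w, hw⟩ := h2
          have hr' : r' = w.reverse ++ List.replicate k' true := by
            have := congrArg List.reverse hw
            rw [List.reverse_reverse, List.reverse_append, List.reverse_replicate] at this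
            rw [this]
          have hval2 : valAux k r' 0 =
              valAux k w.reverse 0 + sumL k w.length k' := by
            rw [hr', valAux_append, valAux_replicate_true]
            simp
          have hmlen : r'.length = w.length + k' := by
            rw [hr']; simp
          have hr'm : r'.length = m := by omega
          -- n ≥ sumL (m - k') k' + L m = L (m+1)
          have hm1 : w.length + k = m + 1 := by omega
          have hrec : L k (m+1) = sumL k w.length k := by
            have h5 := L_rec hk w.length
            rw [hm1] at h5
            exact h5
          have hsumk : sumL k w.length k = sumL k w.length k' + L k m := by
            have h1 := sumL_snoc (k := k) k' w.length
            have h2 : w.length + k' = m := by omega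
            rw [h2] at h1
            rw [← hk'] at h1
            exact h1
          omega
        · -- d ≥ 1 : starts with false
          obtain ⟨d', hd'⟩ : ∃ d', d = d' + 1 := ⟨d - 1, by omega⟩
          rw [hd', List.replicate_succ, List.cons_append] at h2
          have hk'1 : 1 ≤ k' := by omega
          obtain ⟨k'', hk''⟩ : ∃ k'', k' = k'' + 1 := ⟨k' - 1, by omega⟩
          rw [hk'', List.replicate_succ, List.cons_prefix_cons] at h2
          exact absurd h2.1 (by simp)
      · -- infix of the false-padded part
        have : noK k (List.replicate d false ++ r'.reverse) :=
          noK_replicate_false_append (by omega) (noK_reverse.mpr hno') d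
        exact this h1
    · -- value
      rw [valAux_append, valAux_append, valAux_replicate_false, valAux_single]
      simp only [List.length_append, List.length_replicate, Nat.zero_add, Nat.add_zero]
      have e : r'.length + d = m := by omega
      rw [e]
      omega
    · -- length bound
      intro mm hmm
      have : L k m < L k mm := by omega
      have := (L_mono hk).lt_iff_lt.mp this
      simp only [List.length_append, List.length_replicate, List.length_cons]
      simp
      omega

/-- carrying: L p + (value of bits above p) can be re-represented legally from p up -/
theorem carry (hk : 2 ≤ k) : ∀ N t p, t.length ≤ N → noK k t →
    ∃ t2, noK k t2 ∧ valAux k t2 p = L k p + valAux k t (p+1) := by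
  intro N
  induction N with
  | zero =>
      intro t p hlen hno
      have ht : t = [] := List.length_eq_zero_iff.mp (by omega)
      subst ht
      exact ⟨[true], noK_single hk, by rw [valAux_single, valAux_nil]; omega⟩ -- x

  | succ N IH =>
      intro t p hlen hno
      have hk1 : (1:ℕ) ≤ k := by omega
      rcases Nat.lt_or_ge (leadTrues t + 1) k with hlt | hge
      · exact ⟨true :: t, noK_cons_true hno hlt, by rw [valAux_cons, if_pos rfl]⟩
      · have hltk := leadTrues_lt hk1 hno
        have hLT : leadTrues t = k - 1 := by omega
        obtain ⟨u, hcase | hcase⟩ := leadTrues_split t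
        · -- t = replicate (k-1) true ++ false :: u
          have hnu : noK k u := by
            have hsuf : false :: u <:+ t := by rw [hcase.1]; exact List.suffix_append _ _
            exact noK_cons (noK_of_infix hsuf.isInfix hno)
          have hulen : u.length ≤ N := by
            have := congrArg List.length hcase.1
            simp [hLT] at this
            omega
          obtain ⟨u2, hnu2, hval2⟩ := IH u (p + k) hulen hnu
          refine ⟨List.replicate k false ++ u2, noK_replicate_false_append hk1 hnu2 k, ?_⟩
          rw [valAux_append, valAux_replicate_false, List.length_replicate]
          rw [hcase.1, hLT, valAux_append, valAux_replicate_true, List.length_replicate]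
          rw [valAux_cons, if_neg (by simp)]
          have e1 : p + 1 + (k-1) = p + k := by omega
          rw [e1]
          have hrec : L k (p + k) = sumL k p k := L_rec hk p
          have hs : sumL k p k = L k p + sumL k (p+1) (k-1) := by
            obtain ⟨k', hk'⟩ : ∃ k', k = k' + 1 := ⟨k - 1, by omega⟩
            rw [hk', sumL_succ]
            simp
          rw [Nat.zero_add, hval2]
          omega
        · -- t = replicate (k-1) true
          refine ⟨List.replicate k false ++ [true],
            noK_replicate_false_append hk1 (noK_single hk) k, ?_⟩
          rw [valAux_append, valAux_replicate_false, List.length_replicate]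
          rw [hcase.1, hLT, valAux_replicate_true]
          rw [valAux_cons, valAux_nil]
          have hrec : L k (p + k) = sumL k p k := L_rec hk p
          have hs : sumL k p k = L k p + sumL k (p+1) (k-1) := by
            obtain ⟨k', hk'⟩ : ∃ k', k = k' + 1 := ⟨k - 1, by omega⟩
            rw [hk', sumL_succ]
            simp
          simp only [if_pos, Nat.zero_add, Nat.add_zero]
          omega

end Exist
end KB

namespace KB
section Final
variable {k : ℕ}

theorem rep_decomp (hk1 : 1 ≤ k) {r : List Bool} (hno : noK k r) :
    ∃ u, noK k u ∧ valAux k r 0 = sumL k 0 (leadTrues r) + valAux k u (leadTrues r + 1) := by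
  obtain ⟨u, h | h⟩ := leadTrues_split r
  · refine ⟨u, ?_, ?_⟩
    · have hsuf : false :: u <:+ r := by
        conv_rhs => rw [h.1]
        exact List.suffix_append _ _
      exact noK_cons (noK_of_infix hsuf.isInfix hno)
    · conv_lhs => rw [h.1]
      rw [valAux_append, valAux_replicate_true, List.length_replicate, valAux_cons,
        if_neg (by simp)]
      simp only [Nat.zero_add]
  · refine ⟨[], noK_nil hk1, ?_⟩
    conv_lhs => rw [h.1]
    rw [valAux_replicate_true, valAux_nil]
    omega

theorem mem_build (hk : 2 ≤ k) {j : ℕ} (hj : j < k) {u : List Bool} (hnu : noK k u) :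
    (sumL k 0 j + valAux k u (j+1)) + 1 ∈ Xset k j := by
  have hno := noK_comp (by omega) hj hnu
  have hlet := letter hk _ hno
  rw [valAux_append, valAux_replicate_true, List.length_replicate, valAux_cons,
    if_neg (by simp), leadTrues_append_false] at hlet
  simp only [Nat.zero_add] at hlet
  exact ⟨by omega, by simpa using hlet⟩

end Final
end KB

open KB in
/-- For each 0 ≤ j ≤ k−2, the set X^j equals the union of the translated sets
X^{j+1} − 2^j and X^{j+1} + 2^j. -/
theorem Xset_union_translates (k j : ℕ) (hk : 2 ≤ k) (hj : j ≤ k - 2) :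
    Xset k j = ((fun m => m - 2 ^ j) '' Xset k (j + 1)) ∪
               ((fun m => m + 2 ^ j) '' Xset k (j + 1)) := by
  have hjk : j + 1 < k := by omega
  have hLj1 : L k (j+1) = 2^(j+1) := L_pow hjk
  have hsj : sumL k 0 j = 2^j - 1 := sumL_low (by omega)
  have hsj1 : sumL k 0 (j+1) = 2^(j+1) - 1 := sumL_low (by omega)
  have h2j : (1:ℕ) ≤ 2^j := Nat.one_le_two_pow
  have hp : (2:ℕ)^(j+1) = 2^j + 2^j := by rw [pow_succ]; omega
  ext n
  simp only [Set.mem_union, Set.mem_image]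
  have key : ∀ m ∈ Xset k (j+1), ∃ V, m = 2^(j+1) + V ∧
      ∃ u, noK k u ∧ V = valAux k u (j+2) := by
    intro m hm
    obtain ⟨hm1, hmkb⟩ := hm
    obtain ⟨s, hnos, hvals, -⟩ := exists_rep hk (m-1)
    have hlts : leadTrues s = j + 1 := by rw [← letter hk s hnos, hvals, hmkb]
    obtain ⟨u, hnu, hdec⟩ := rep_decomp (by omega) hnos
    rw [hlts] at hdec
    refine ⟨valAux k u (j+2), ?_, u, hnu, rfl⟩
    have h1 : m - 1 = sumL k 0 (j+1) + valAux k u (j+2) := by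
      rw [← hvals]
      exact hdec
    have h2 : (1:ℕ) ≤ 2^(j+1) := Nat.one_le_two_pow
    omega
  constructor
  · intro hn
    obtain ⟨hn1, hkb⟩ := hn
    obtain ⟨r, hno, hval, -⟩ := exists_rep hk (n-1)
    have hlt : leadTrues r = j := by rw [← letter hk r hno, hval, hkb]
    obtain ⟨u, hnu, hdec⟩ := rep_decomp (by omega) hno
    rw [hlt] at hdec
    have hval0 : n = 2^j + valAux k u (j+1) := by omega
    cases u with
    | nil =>
        refine Or.inl ⟨(sumL k 0 (j+1) + valAux k ([] : List Bool) (j+2)) + 1,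
          mem_build hk hjk (noK_nil (by omega)), ?_⟩
        show _ - 2^j = n
        rw [valAux_nil] at hval0 ⊢
        omega
    | cons b u' =>
        have hnu' : noK k u' := noK_cons hnu
        cases b with
        | true =>
            refine Or.inr ⟨(sumL k 0 (j+1) + valAux k u' (j+2)) + 1,
              mem_build hk hjk hnu', ?_⟩
            show _ + 2^j = n
            have hv : valAux k (true :: u') (j+1) = 2^(j+1) + valAux k u' (j+2) := by
              rw [valAux_cons, if_pos rfl, hLj1]
            omega
        | false =>
            refine Or.inl ⟨(sumL k 0 (j+1) + valAux k u' (j+2)) + 1,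
              mem_build hk hjk hnu', ?_⟩
            show _ - 2^j = n
            have hv : valAux k (false :: u') (j+1) = valAux k u' (j+2) := by
              rw [valAux_cons, if_neg (by simp), Nat.zero_add]
            omega
  · intro hn
    rcases hn with ⟨m, hm, heq⟩ | ⟨m, hm, heq⟩
    · -- n = m - 2^j
      obtain ⟨V, hmV, u, hnu, rfl⟩ := key m hm
      have hmem := mem_build hk (show j < k by omega) (noK_cons_false (by omega) hnu)
      have hvc : valAux k (false :: u) (j+1) = valAux k u (j+2) := by
        rw [valAux_cons, if_neg (by simp), Nat.zero_add]
      have he : n = (sumL k 0 j + valAux k (false :: u) (j+1)) + 1 := by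
        omega
      rw [he]
      exact hmem
    · -- n = m + 2^j
      obtain ⟨V, hmV, u, hnu, rfl⟩ := key m hm
      obtain ⟨t2, hnt2, hvt2⟩ := carry hk u.length u (j+1) (le_refl _) hnu
      have hvt2' : valAux k t2 (j+1) = L k (j+1) + valAux k u (j+2) := hvt2
      have hmem := mem_build hk (show j < k by omega) hnt2
      have he : n = (sumL k 0 j + valAux k t2 (j+1)) + 1 := by
        rw [hvt2', hLj1]
        omega
      rw [he]
      exact hmem
end

section
/- For each 0 ≤ j ≤ k−2, the first entry of the difference row Δ^j of the k-bonacci positions table equals 2^j, i.e., X^{j+1}_1 − X^j_1 = 2^j, and the minimal gap between consecutive entries of Δ^j is 2^j. -/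
/-- X^j_n: the 1-based position of the n-th (1-based) occurrence of letter j. -/
noncomputable def Xpos (k j n : ℕ) : ℕ :=
  Nat.nth (fun m => kbonacci k m = j) (n - 1) + 1

/-- Δ^j_n = X^{j+1}_n − X^j_n. -/
noncomputable def Δrow (k j n : ℕ) : ℕ := Xpos k (j + 1) n - Xpos k j n

/-!
Since `ω = σ(ω)`, the word `ω` is the concatenation of the blocks `σ(ω m)`, each a `0`
followed by `ω m + 1` unless `ω m = k - 1`; the block of `ω m` starts at `blockStart k m`,
which is `m` plus the number of letters `< k - 1` before `m`. So the occurrences of `j + 1` sit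
exactly one place after the starts of the blocks of the occurrences of `j`, and `Δ^j_n - 1`
counts the letters `< k - 1` before the `n`-th occurrence of `j`; a gap of `Δ^j` counts them
between two consecutive occurrences of `j`.

Reading the blocks, the letters `< t + 1` between consecutive occurrences of `j + 1` are one `0`
per letter between the corresponding occurrences of `j` plus one shifted letter per letter `< t`
there. Induction on `j` then shows that there are at least `2 ^ j` letters `< t` between
consecutive occurrences of `j` whenever `j < t`. The bound is attained: the image of `k - 1`
gives two adjacent zeros, and the image of two occurrences of `j` at distance `2 ^ j` is a pair
of occurrences of `j + 1` at distance `2 ^ (j + 1)`. In the same way the first `j` sits at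
`2 ^ j - 1` with only smaller letters before it, which gives `Δ^j_1 = 2 ^ j`.
-/

theorem Nat.count_congr {p q : ℕ → Prop} [DecidablePred p] [DecidablePred q]
    (h : ∀ i, p i ↔ q i) (n : ℕ) : Nat.count p n = Nat.count q n :=
  le_antisymm (Nat.count_mono_left fun i _ => (h i).1) (Nat.count_mono_left fun i _ => (h i).2)

theorem Nat.count_add_le (p : ℕ → Prop) [DecidablePred p] (a d : ℕ) :
    Nat.count p (a + d) ≤ Nat.count p a + d := by
  rw [Nat.count_add]
  exact Nat.add_le_add_left (Nat.count_le _) _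

namespace KBonacci

variable {k : ℕ}

lemma subW_append (u v : List ℕ) : subW k (u ++ v) = subW k u ++ subW k v :=
  List.flatMap_append

lemma subW_singleton (a : ℕ) : subW k [a] = if a + 1 < k then [0, a + 1] else [0] := by
  simp [subW]

lemma subW_prefix_subW {u v : List ℕ} (h : u <+: v) : subW k u <+: subW k v := by
  obtain ⟨t, rfl⟩ := h
  exact ⟨subW k t, (subW_append u t).symm⟩

lemma length_le_length_subW (w : List ℕ) : w.length ≤ (subW k w).length := by
  induction w with
  | nil => simp
  | cons a t ih =>
    rw [← List.singleton_append, subW_append, subW_singleton]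
    split <;> simp <;> omega

lemma iterate_subW_prefix_succ (n : ℕ) : (subW k)^[n] [0] <+: (subW k)^[n + 1] [0] := by
  induction n with
  | zero => rw [Function.iterate_one, subW_singleton]; split <;> simp
  | succ n ih => simpa only [Function.iterate_succ_apply'] using subW_prefix_subW ih

lemma iterate_subW_prefix {m n : ℕ} (h : m ≤ n) : (subW k)^[m] [0] <+: (subW k)^[n] [0] := by
  induction n, h using Nat.le_induction with
  | base => exact List.prefix_refl _
  | succ n _ ih => exact ih.trans (iterate_subW_prefix_succ n)

lemma le_length_iterate_subW (hk : 2 ≤ k) (n : ℕ) : n + 1 ≤ ((subW k)^[n] [0]).length := by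
  induction n with
  | zero => simp
  | succ n ih =>
    obtain ⟨t, ht⟩ := iterate_subW_prefix (k := k) (Nat.zero_le n)
    rw [Function.iterate_zero_apply, List.singleton_append] at ht
    rw [Function.iterate_succ_apply', ← ht, ← List.singleton_append, subW_append,
      subW_singleton, if_pos (by omega)]
    rw [← ht] at ih
    have := length_le_length_subW (k := k) t
    simp only [List.length_append, List.length_cons] at ih ⊢
    omega

lemma kbonacci_eq_of_prefix (hk : 2 ≤ k) {u : List ℕ} {n i : ℕ} (hu : u <+: (subW k)^[n] [0])
    (hi : i < u.length) : kbonacci k i = u[i] := by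
  have hlen (m : ℕ) := le_length_iterate_subW hk m
  have hi' : i < ((subW k)^[i + 1] [0]).length := by have := hlen (i + 1); omega
  rw [hu.getElem hi]
  change ((subW k)^[i + 1] [0]).getD i 0 = _
  rw [List.getD_eq_getElem _ _ hi']
  rcases le_total (i + 1) n with h | h
  · exact (iterate_subW_prefix h).getElem hi'
  · exact ((iterate_subW_prefix h).getElem _).symm

def blockStart (k : ℕ) : ℕ → ℕ
  | 0 => 0
  | m + 1 => blockStart k m + (subW k [kbonacci k m]).length

lemma length_subW_take (hk : 2 ≤ k) {n m : ℕ} (hm : m ≤ ((subW k)^[n] [0]).length) :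
    (subW k (((subW k)^[n] [0]).take m)).length = blockStart k m := by
  induction m with
  | zero => simp [blockStart, subW]
  | succ m ih =>
    rw [List.take_succ_eq_append_getElem hm, subW_append, List.length_append, ih (by omega),
      ← kbonacci_eq_of_prefix hk (List.prefix_refl _) hm, blockStart]

lemma kbonacci_blockStart_add (hk : 2 ≤ k) (m : ℕ) {i a : ℕ}
    (h : (subW k [kbonacci k m])[i]? = some a) : kbonacci k (blockStart k m + i) = a := by
  have hm : m < ((subW k)^[m + 1] [0]).length := by
    have := le_length_iterate_subW hk (m + 1); omega
  set w := (subW k)^[m + 1] [0]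
  have hblock : subW k (w.take m) ++ subW k [kbonacci k m] <+: (subW k)^[m + 2] [0] := by
    rw [kbonacci_eq_of_prefix hk (List.prefix_refl _) hm, ← subW_append,
      ← List.take_succ_eq_append_getElem hm, Function.iterate_succ_apply' _ (m + 1)]
    exact subW_prefix_subW (List.take_prefix _ _)
  have hget : (subW k (w.take m) ++ subW k [kbonacci k m])[blockStart k m + i]? = some a := by
    rw [List.getElem?_append_right (by rw [length_subW_take hk hm.le]; omega),
      length_subW_take hk hm.le, Nat.add_sub_cancel_left, h]
  obtain ⟨hi, rfl⟩ := List.getElem?_eq_some_iff.mp hget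
  exact kbonacci_eq_of_prefix hk hblock hi

lemma kbonacci_blockStart (hk : 2 ≤ k) (m : ℕ) : kbonacci k (blockStart k m) = 0 :=
  kbonacci_blockStart_add hk m (i := 0) (by rw [subW_singleton]; split <;> rfl)

lemma kbonacci_blockStart_add_one (hk : 2 ≤ k) {m : ℕ} (h : kbonacci k m < k - 1) :
    kbonacci k (blockStart k m + 1) = kbonacci k m + 1 :=
  kbonacci_blockStart_add hk m (by rw [subW_singleton, if_pos (by omega)]; rfl)

lemma blockStart_succ (m : ℕ) :
    blockStart k (m + 1) = blockStart k m + if kbonacci k m < k - 1 then 2 else 1 := by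
  rw [blockStart, subW_singleton]
  split_ifs <;> first | rfl | omega

lemma blockStart_strictMono : StrictMono (blockStart k) :=
  strictMono_nat_of_lt_succ fun m => by rw [blockStart_succ]; split <;> omega

lemma count_blockStart (hk : 2 ≤ k) (P : ℕ → Prop) [DecidablePred P] (m : ℕ) :
    Nat.count (fun i => P (kbonacci k i)) (blockStart k m) =
      (if P 0 then m else 0) +
        Nat.count (fun i => kbonacci k i < k - 1 ∧ P (kbonacci k i + 1)) m := by
  induction m with
  | zero => simp [blockStart]
  | succ m ih =>
    rw [Nat.count_succ _ m, blockStart_succ]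
    by_cases h : kbonacci k m < k - 1
    · rw [if_pos h, show blockStart k m + 2 = blockStart k m + 1 + 1 from rfl, Nat.count_succ,
        Nat.count_succ, kbonacci_blockStart hk, kbonacci_blockStart_add_one hk h, ih]
      by_cases P 0 <;> by_cases P (kbonacci k m + 1) <;> simp [*] <;> omega
    · rw [if_neg h, Nat.count_succ, kbonacci_blockStart hk, ih]
      by_cases P 0 <;> simp [*]; omega

lemma blockStart_eq_add_count (hk : 2 ≤ k) (m : ℕ) :
    blockStart k m = m + Nat.count (kbonacci k · < k - 1) m := by
  simpa using count_blockStart hk (fun _ => True) m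

lemma count_lt_succ_blockStart_add_one (hk : 2 ≤ k) {t : ℕ} (ht : t < k) (m : ℕ) :
    Nat.count (kbonacci k · < t + 1) (blockStart k m + 1) =
      m + Nat.count (kbonacci k · < t) m + 1 := by
  rw [Nat.count_succ, count_blockStart hk (· < t + 1), kbonacci_blockStart hk, if_pos t.succ_pos,
    if_pos t.succ_pos, Nat.count_congr (q := (kbonacci k · < t)) (by omega)]

lemma count_eq_succ_blockStart_add_one (hk : 2 ≤ k) {j : ℕ} (hj : j + 1 < k) (m : ℕ) :
    Nat.count (kbonacci k · = j + 1) (blockStart k m + 1) = Nat.count (kbonacci k · = j) m := by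
  rw [Nat.count_succ, count_blockStart hk (· = j + 1), kbonacci_blockStart hk,
    if_neg j.succ_ne_zero.symm, if_neg j.succ_ne_zero.symm, zero_add, add_zero,
    Nat.count_congr (q := (kbonacci k · = j)) (by omega)]

lemma infinite_setOf_kbonacci_eq (hk : 2 ≤ k) {j : ℕ} (hj : j < k) :
    {m | kbonacci k m = j}.Infinite := by
  induction j with
  | zero =>
    exact Set.infinite_of_injective_forall_mem blockStart_strictMono.injective
      (kbonacci_blockStart hk)
  | succ j ih =>
    refine Set.Infinite.mono ?_ ((ih (by omega)).image
      ((add_left_injective 1).comp (blockStart_strictMono (k := k)).injective).injOn)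
    rintro _ ⟨m, hm : kbonacci k m = j, rfl⟩
    exact (kbonacci_blockStart_add_one hk (by omega)).trans (by rw [hm])

-- 0-based, like its argument: `Xpos k j (c + 1) = occ k j c + 1`.
noncomputable abbrev occ (k j : ℕ) : ℕ → ℕ := Nat.nth (kbonacci k · = j)

lemma kbonacci_occ (hk : 2 ≤ k) {j : ℕ} (hj : j < k) (c : ℕ) : kbonacci k (occ k j c) = j :=
  Nat.nth_mem_of_infinite (infinite_setOf_kbonacci_eq hk hj) c

lemma occ_strictMono (hk : 2 ≤ k) {j : ℕ} (hj : j < k) : StrictMono (occ k j) :=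
  Nat.nth_strictMono (infinite_setOf_kbonacci_eq hk hj)

lemma occ_succ_letter (hk : 2 ≤ k) {j : ℕ} (hj : j + 1 < k) (c : ℕ) :
    occ k (j + 1) c = blockStart k (occ k j c) + 1 := by
  have hcount : Nat.count (kbonacci k · = j + 1) (blockStart k (occ k j c) + 1) = c := by
    rw [count_eq_succ_blockStart_add_one hk hj,
      Nat.count_nth_of_infinite (infinite_setOf_kbonacci_eq hk (by omega))]
  have hocc := kbonacci_occ hk (j := j) (by omega) c
  conv_lhs => rw [← hcount]
  exact Nat.nth_count (p := (kbonacci k · = j + 1))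
    (by rw [kbonacci_blockStart_add_one hk (m := occ k j c) (by omega), hocc])

lemma blockStart_eq_two_mul (hk : 2 ≤ k) {m : ℕ} (h : ∀ i < m, kbonacci k i < k - 1) :
    blockStart k m = 2 * m := by
  rw [blockStart_eq_add_count hk, Nat.count_iff_forall.mpr h, two_mul]

lemma occ_zero_zero (hk : 2 ≤ k) : occ k 0 0 = 0 :=
  Nat.nth_zero_of_zero (kbonacci_blockStart hk 0)

lemma kbonacci_lt_of_lt_occ_zero (hk : 2 ≤ k) {j : ℕ} (hj : j < k) {i : ℕ}
    (hi : i < occ k j 0) : kbonacci k i < j := by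
  refine (Nat.count_iff_forall (p := (kbonacci k · < j))).mp ?_ i hi
  clear i hi
  induction j with
  | zero => simp [occ_zero_zero hk]
  | succ j ih =>
    have hbelow := Nat.count_iff_forall.mp (ih (by omega))
    rw [occ_succ_letter hk hj, count_lt_succ_blockStart_add_one hk (by omega), ih (by omega),
      blockStart_eq_two_mul hk fun i hi => by have := hbelow i hi; omega]
    omega

lemma occ_zero_add_one (hk : 2 ≤ k) {j : ℕ} (hj : j < k) : occ k j 0 + 1 = 2 ^ j := by
  induction j with
  | zero => simp [occ_zero_zero hk]
  | succ j ih =>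
    have hbelow (i : ℕ) (hi : i < occ k j 0) : kbonacci k i < k - 1 := by
      have := kbonacci_lt_of_lt_occ_zero hk (j := j) (by omega) hi; omega
    rw [occ_succ_letter hk hj, blockStart_eq_two_mul hk hbelow, pow_succ, ← ih (by omega)]
    ring

lemma count_lt_occ_add_two_pow_le (hk : 2 ≤ k) {j t : ℕ} (hjt : j < t) (htk : t ≤ k)
    (c : ℕ) :
    Nat.count (kbonacci k · < t) (occ k j c) + 2 ^ j ≤
      Nat.count (kbonacci k · < t) (occ k j (c + 1)) := by
  induction j generalizing t with
  | zero =>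
    exact Nat.count_strict_mono (by rw [kbonacci_occ hk (by omega)]; omega)
      (occ_strictMono hk (by omega) (Nat.lt_add_one c))
  | succ j ih =>
    obtain ⟨s, rfl⟩ := Nat.exists_eq_add_of_lt hjt
    have hjs : j < j + s + 1 := by omega
    have hmono := (occ_strictMono hk (j := j) (by omega) (Nat.lt_add_one c)).le
    obtain ⟨d, hd⟩ := Nat.exists_eq_add_of_le hmono
    have hcount := ih hjs (by omega)
    have hdist := Nat.count_add_le (kbonacci k · < j + s + 1) (occ k j c) d
    rw [← hd] at hdist
    rw [occ_succ_letter hk (by omega), occ_succ_letter hk (by omega),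
      show j + 1 + s + 1 = j + s + 1 + 1 by ring, count_lt_succ_blockStart_add_one hk (by omega),
      count_lt_succ_blockStart_add_one hk (by omega), pow_succ]
    omega

lemma count_lt_occ_succ_eq_of_occ_succ_eq (hk : 2 ≤ k) {j c : ℕ} (hj : j + 1 < k)
    (h : occ k j (c + 1) = occ k j c + 2 ^ j) :
    Nat.count (kbonacci k · < k - 1) (occ k j (c + 1)) =
      Nat.count (kbonacci k · < k - 1) (occ k j c) + 2 ^ j := by
  have hlow := count_lt_occ_add_two_pow_le hk (j := j) (t := k - 1) (by omega) (by omega) c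
  have hhigh := Nat.count_add_le (kbonacci k · < k - 1) (occ k j c) (2 ^ j)
  rw [← h] at hhigh
  exact le_antisymm hhigh hlow

lemma exists_occ_succ_eq_add_two_pow (hk : 2 ≤ k) {j : ℕ} (hj : j + 1 < k) :
    ∃ c, occ k j (c + 1) = occ k j c + 2 ^ j := by
  induction j with
  | zero =>
    -- two consecutive zeros arise as the image of the letter `k - 1`
    set p := occ k (k - 1) 0
    have hp : ¬ kbonacci k p < k - 1 := by rw [kbonacci_occ hk (by omega)]; omega
    have hnext : blockStart k (p + 1) = blockStart k p + 1 := by simp [blockStart_succ, hp]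
    set c := Nat.count (kbonacci k · = 0) (blockStart k p)
    have hcount : Nat.count (kbonacci k · = 0) (blockStart k p + 1) = c + 1 := by
      rw [Nat.count_succ, if_pos (kbonacci_blockStart hk p)]
    have hc : occ k 0 c = blockStart k p := Nat.nth_count (kbonacci_blockStart hk p)
    have hc' : occ k 0 (c + 1) = blockStart k p + 1 := by
      rw [← hcount]
      exact Nat.nth_count (p := (kbonacci k · = 0)) (hnext ▸ kbonacci_blockStart hk (p + 1))
    exact ⟨c, by rw [hc, hc', pow_zero]⟩
  | succ j ih =>
    obtain ⟨c, hc⟩ := ih (by omega)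
    refine ⟨c, ?_⟩
    rw [occ_succ_letter hk (j := j) (by omega), occ_succ_letter hk (j := j) (by omega),
      blockStart_eq_add_count hk, blockStart_eq_add_count hk,
      count_lt_occ_succ_eq_of_occ_succ_eq hk (by omega) hc, hc, pow_succ]
    ring

lemma Δrow_eq (hk : 2 ≤ k) {j : ℕ} (hj : j + 1 < k) (n : ℕ) :
    Δrow k j n = Nat.count (kbonacci k · < k - 1) (occ k j (n - 1)) + 1 := by
  change occ k (j + 1) (n - 1) + 1 - (occ k j (n - 1) + 1) = _
  rw [occ_succ_letter hk hj, blockStart_eq_add_count hk]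
  omega

end KBonacci

open KBonacci in
/-- For 0 ≤ j ≤ k−2, the first entry of Δ^j equals 2^j, and the minimal gap
between consecutive entries of Δ^j equals 2^j. -/
theorem delta_row_first_entry_and_min_gap (k j : ℕ) (hk : 2 ≤ k) (hj : j ≤ k - 2) :
    Δrow k j 1 = 2 ^ j ∧
    IsLeast {g | ∃ n, 1 ≤ n ∧ Δrow k j (n + 1) - Δrow k j n = g} (2 ^ j) := by
  have hjk : j + 1 < k := by omega
  have hgap (c : ℕ) : Δrow k j (c + 1 + 1) - Δrow k j (c + 1) =
      Nat.count (kbonacci k · < k - 1) (occ k j (c + 1)) -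
        Nat.count (kbonacci k · < k - 1) (occ k j c) := by
    rw [Δrow_eq hk hjk, Δrow_eq hk hjk, Nat.add_sub_cancel, Nat.add_sub_cancel]
    omega
  refine ⟨?_, ?_, ?_⟩
  · have hbelow (i : ℕ) (hi : i < occ k j 0) : kbonacci k i < k - 1 := by
      have := kbonacci_lt_of_lt_occ_zero hk (j := j) (by omega) hi; omega
    rw [Δrow_eq hk hjk, Nat.sub_self, Nat.count_iff_forall.mpr hbelow,
      occ_zero_add_one hk (by omega)]
  · obtain ⟨c, hc⟩ := exists_occ_succ_eq_add_two_pow hk hjk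
    refine ⟨c + 1, by omega, ?_⟩
    rw [hgap, count_lt_occ_succ_eq_of_occ_succ_eq hk hjk hc, Nat.add_sub_cancel_left]
  · rintro _ ⟨n, hn, rfl⟩
    obtain ⟨c, rfl⟩ := Nat.exists_eq_add_of_le' hn
    have := count_lt_occ_add_two_pow_le hk (t := k - 1) (j := j) (by omega) (by omega) c
    rw [hgap]
    exact Nat.le_sub_of_add_le' this
end
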